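/- Let F = (ℒ, ℛ, 𝒜, ¯) be a bipolar ABA framework and let A ⊆ 𝒜 be closed and conflict-free. If for every assumption β ∈ 𝒜 \ A such that {β} attacks A it holds that A attacks {β}, then A defends itself, and hence A is an admissible extension. -/

import Mathlib

/-- An ABA framework over a type `S` of sentences (the language `ℒ` is all of `S`).
A rule `(φ, body) ∈ Rules` stands for `φ ← body` (head `φ`, body a list of sentences;
an empty body is the rule `φ ← ⊤`). -/
structure ABA (S : Type*) where
  Rules : Set (S × List S)
  Asms : Set S
  contrary : S → S
  asms_nonempty : Asms.Nonempty

namespace ABA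

variable {S : Type*}

/-- A framework is bipolar iff every rule has the form `φ ← α` with `α` an assumption
and `φ` either an assumption or the contrary of an assumption. -/
def Bipolar (F : ABA S) : Prop :=
  ∀ r ∈ F.Rules, ∃ α ∈ F.Asms, r.2 = [α] ∧
    (r.1 ∈ F.Asms ∨ ∃ β ∈ F.Asms, r.1 = F.contrary β)

/-- `F.Deduces A R φ` : there is a deduction tree for `φ` whose leaves are labelled by `⊤`
or by assumptions (`A` being the set of all such leaf assumptions), and each non-leaf `ψ`
has children labelled by the body of some `ψ`-headed rule (`R` being the set of rules used). -/
inductive Deduces (F : ABA S) : Set S → Set (S × List S) → S → Prop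
  | assumption {α : S} (h : α ∈ F.Asms) : Deduces F {α} ∅ α
  | step {φ : S} {body : List S} (hr : (φ, body) ∈ F.Rules)
      (As : Fin body.length → Set S) (Rs : Fin body.length → Set (S × List S))
      (hd : ∀ i : Fin body.length, Deduces F (As i) (Rs i) (body.get i)) :
      Deduces F (⋃ i, As i) (insert (φ, body) (⋃ i, Rs i)) φ

/-- `A` attacks `B` iff there is a deduction `A' ⊢^R β̄` with `β ∈ B`, `A' ⊆ A`, `R ⊆ ℛ`. -/
def Attacks (F : ABA S) (A B : Set S) : Prop :=
  ∃ β ∈ B, ∃ A' ⊆ A, ∃ R ⊆ F.Rules, F.Deduces A' R (F.contrary β)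

/-- Closure: `Cl(A) = {α ∈ 𝒜 : ∃ A' ⊆ A, R ⊆ ℛ with A' ⊢^R α}`. -/
def Cl (F : ABA S) (A : Set S) : Set S :=
  {α ∈ F.Asms | ∃ A' ⊆ A, ∃ R ⊆ F.Rules, F.Deduces A' R α}

def Closed (F : ABA S) (A : Set S) : Prop := F.Cl A = A

def ConflictFree (F : ABA S) (A : Set S) : Prop := ¬ F.Attacks A A

/-- `A` defends `α` iff every closed `B ⊆ 𝒜` attacking `{α}` is attacked by `A`. -/
def Defends (F : ABA S) (A : Set S) (α : S) : Prop :=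
  ∀ B ⊆ F.Asms, F.Closed B → F.Attacks B {α} → F.Attacks A B

/-- `E ⊆ 𝒜` is admissible iff it is closed, conflict-free and defends itself. -/
def Admissible (F : ABA S) (E : Set S) : Prop :=
  E ⊆ F.Asms ∧ F.Closed E ∧ F.ConflictFree E ∧ ∀ α ∈ E, F.Defends E α

/-- `E` is preferred iff it is ⊆-maximally admissible. -/
def Preferred (F : ABA S) (E : Set S) : Prop :=
  F.Admissible E ∧ ∀ E', F.Admissible E' → E ⊆ E' → E' = E

/-- `E ⊆ 𝒜` is set-stable iff it is closed, conflict-free and attacks `Cl({α})`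
for every `α ∈ 𝒜 \ E`. -/
def SetStable (F : ABA S) (E : Set S) : Prop :=
  E ⊆ F.Asms ∧ F.Closed E ∧ F.ConflictFree E ∧
    ∀ α ∈ F.Asms \ E, F.Attacks E (F.Cl {α})

/-- `A` minimally attacks `B` iff `A` attacks `B` and no proper subset of `A` attacks `B`. -/
def MinAttacks (F : ABA S) (A B : Set S) : Prop :=
  F.Attacks A B ∧ ∀ A' ⊂ A, ¬ F.Attacks A' B

end ABA

/-! In a bipolar framework every rule has a one-element body, so each deduction has exactly one
leaf assumption. Hence an attack of any `B` on `α ∈ A` comes from a single `γ ∈ B`; then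
`{γ}` attacks `A`, conflict-freeness gives `γ ∉ A`, and `A` counter-attacks `{γ} ⊆ B`. -/

namespace ABA

variable {S : Type*} {F : ABA S}

theorem Deduces.exists_eq_singleton (hF : ∀ r ∈ F.Rules, ∃ α, r.2 = [α]) {A : Set S}
    {R : Set (S × List S)} {φ : S} (h : F.Deduces A R φ) : ∃ γ, A = {γ} := by
  induction h with
  | assumption => exact ⟨_, rfl⟩
  | step hr As _ _ ih =>
    obtain ⟨α, rfl⟩ := hF _ hr
    obtain ⟨γ, hγ⟩ := ih 0
    exact ⟨γ, (iSup_unique (ι := Fin 1) As).trans hγ⟩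

theorem Bipolar.body_singleton (hF : F.Bipolar) : ∀ r ∈ F.Rules, ∃ α, r.2 = [α] :=
  fun r hr ↦ let ⟨α, _, hα, _⟩ := hF r hr; ⟨α, hα⟩

theorem Attacks.mono {A A' B B' : Set S} (h : F.Attacks A B) (hA : A ⊆ A') (hB : B ⊆ B') :
    F.Attacks A' B' :=
  let ⟨β, hβ, A₀, hA₀, R, hR, hd⟩ := h
  ⟨β, hB hβ, A₀, hA₀.trans hA, R, hR, hd⟩

theorem Attacks.exists_singleton (hF : ∀ r ∈ F.Rules, ∃ α, r.2 = [α]) {A B : Set S}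
    (h : F.Attacks A B) : ∃ γ ∈ A, F.Attacks {γ} B := by
  obtain ⟨β, hβ, A₀, hA₀, R, hR, hd⟩ := h
  obtain ⟨γ, rfl⟩ := hd.exists_eq_singleton hF
  exact ⟨γ, hA₀ rfl, β, hβ, {γ}, subset_rfl, R, hR, hd⟩

theorem defends_of_counterattacks_singletons (hF : ∀ r ∈ F.Rules, ∃ α, r.2 = [α])
    {A : Set S} (hcf : F.ConflictFree A)
    (hdef : ∀ β ∈ F.Asms \ A, F.Attacks {β} A → F.Attacks A {β}) {α : S} (hα : α ∈ A) :
    F.Defends A α := by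
  intro B hB _ hBα
  obtain ⟨γ, hγB, hγα⟩ := hBα.exists_singleton hF
  have hγA : F.Attacks {γ} A := hγα.mono subset_rfl (Set.singleton_subset_iff.2 hα)
  have hγ : γ ∉ A := fun hγ ↦ hcf (hγA.mono (Set.singleton_subset_iff.2 hγ) subset_rfl)
  exact (hdef γ ⟨hB hγB, hγ⟩ hγA).mono subset_rfl (Set.singleton_subset_iff.2 hγB)

end ABA

/-- If a closed, conflict-free `A ⊆ 𝒜` counter-attacks every singleton
attacker `{β}` with `β ∈ 𝒜 \ A`, then `A` defends itself and hence is admissible. -/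
theorem bipolar_singleton_defence_suffices {S : Type*} (F : ABA S) (hF : F.Bipolar)
    (A : Set S) (hA : A ⊆ F.Asms) (hcl : F.Closed A) (hcf : F.ConflictFree A)
    (hdef : ∀ β ∈ F.Asms \ A, F.Attacks {β} A → F.Attacks A {β}) :
    (∀ α ∈ A, F.Defends A α) ∧ F.Admissible A := by
  have hdefends : ∀ α ∈ A, F.Defends A α :=
    fun _ ↦ ABA.defends_of_counterattacks_singletons hF.body_singleton hcf hdef
  exact ⟨hdefends, hA, hcl, hcf, hdefends⟩
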